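/- For any solution x of ẍ = -(5/(3(t+K)))ẋ - x^7 on (−K,∞), the function I(t) = (K+t)^{5/3}·(12(K+t)ẋ² + 8ẋx + 3x^8(K+t)) is constant in t. -/

import Mathlib

/-!
For `x'' + (k/τ) x' + xⁿ = 0` with `τ = K + t`, the function
`τᵏ ((n+1)/2 · τ x'² + (k+1) x x' + τ xⁿ⁺¹)` has derivative
`-(τᵏ x'²/2) (k(n-1) - (n+3))`, so it is a first integral exactly when `k = (n+3)/(n-1)`.
For `n = 7` this gives `k = 5/3`, and three times this invariant is `I`.
-/

lemma HasDerivAt.add_const_rpow_mul {f : ℝ → ℝ} {f' K p t : ℝ} (hf : HasDerivAt f f' t)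
    (ht : 0 < K + t) :
    HasDerivAt (fun s => (K + s) ^ p * f s) ((K + t) ^ (p - 1) * (p * f t + (K + t) * f')) t := by
  have hpow : HasDerivAt (fun s => (K + s) ^ p) (1 * p * (K + t) ^ (p - 1)) t :=
    ((hasDerivAt_id t).const_add K).rpow_const (Or.inl ht.ne')
  refine (hpow.fun_mul hf).congr_deriv ?_
  rw [Real.rpow_sub_one ht.ne']
  field_simp

noncomputable def emdenInvariant (n : ℕ) (k K : ℝ) (x : ℝ → ℝ) (s : ℝ) : ℝ :=
  (K + s) ^ k * ((n + 1) / 2 * (K + s) * deriv x s ^ 2 + (k + 1) * deriv x s * x s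
    + (K + s) * x s ^ (n + 1))

lemma hasDerivAt_emdenInvariant {n : ℕ} {k K t : ℝ} {x : ℝ → ℝ} (hk : k * (n - 1) = n + 3)
    (ht : 0 < K + t) (hx : DifferentiableAt ℝ x t) (hx' : DifferentiableAt ℝ (deriv x) t)
    (hode : deriv (deriv x) t = -(k / (t + K)) * deriv x t - x t ^ n) :
    HasDerivAt (emdenInvariant n k K x) 0 t := by
  have hτ : HasDerivAt (fun s => K + s) 1 t := (hasDerivAt_id t).const_add K
  have hx₁ := hx.hasDerivAt
  have hx₂ := hx'.hasDerivAt
  have hbracket := (((hτ.const_mul ((n + 1) / 2 : ℝ)).fun_mul (hx₂.fun_pow 2)).fun_add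
    ((hx₂.const_mul (k + 1)).fun_mul hx₁)).fun_add (hτ.fun_mul (hx₁.fun_pow (n + 1)))
  have hode_cleared : (K + t) * deriv (deriv x) t = -k * deriv x t - (K + t) * x t ^ n := by
    have : t + K ≠ 0 := by linarith
    rw [hode]; field_simp; ring
  refine (hbracket.add_const_rpow_mul ht).congr_deriv ?_
  simp only [add_tsub_cancel_right]
  push_cast
  linear_combination (K + t) ^ (k - 1) *
    (((n + 1) * (K + t) * deriv x t + (k + 1) * x t) * hode_cleared - (K + t) * deriv x t ^ 2 / 2 * hk)

/-- For any solution `x` of `ẍ = -(5/(3(t+K)))ẋ - x⁷` on `(-K,∞)`, the function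
`I(t) = (K+t)^{5/3}(12(K+t)ẋ² + 8ẋx + 3x⁸(K+t))` is constant in `t`. -/
theorem emden_constant_of_motion_n7
    (K : ℝ) (x : ℝ → ℝ)
    (hx : ∀ t : ℝ, -K < t →
      DifferentiableAt ℝ x t ∧ DifferentiableAt ℝ (deriv x) t ∧
      deriv (deriv x) t = -(5 / (3 * (t + K))) * deriv x t - x t ^ 7) :
    ∀ t : ℝ, -K < t →
      deriv (fun s => (K + s) ^ ((5 : ℝ) / 3) *
        (12 * (K + s) * (deriv x s) ^ 2 + 8 * deriv x s * x s
          + 3 * x s ^ 8 * (K + s))) t = 0 := by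
  intro t ht
  obtain ⟨hx, hx', hode⟩ := hx t ht
  have hI : (fun s => (K + s) ^ ((5 : ℝ) / 3) *
      (12 * (K + s) * (deriv x s) ^ 2 + 8 * deriv x s * x s + 3 * x s ^ 8 * (K + s)))
      = fun s => 3 * emdenInvariant 7 (5 / 3) K x s := by
    ext s; simp only [emdenInvariant]; push_cast; ring
  rw [← div_div] at hode
  have hinv := hasDerivAt_emdenInvariant (n := 7) (by norm_num) (by linarith) hx hx' hode
  rw [hI, (hinv.const_mul 3).deriv, mul_zero]
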